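/- (Proposition 3.10: the discrete boundary-layer set is contained in the discrete entropy set.) Let f : ℝ^N → ℝ^N, let g : ℝ^N × ℝ^N → ℝ^N be a numerical flux, let F : ℝ^N → ℝ be continuous, let G : ℝ^N × ℝ^N → ℝ be a continuous numerical entropy flux consistent with F, i.e. G(w,w) = F(w) for all w, and let U : ℝ^N → ℝ and λ > 0 be such that the discrete entropy inequality holds: for all a, b, c ∈ ℝ^N, U( b − λ( g(b,c) − g(a,b) ) ) − U(b) + λ ( G(b,c) − G(a,b) ) ≤ 0. Suppose v : ℕ → ℝ^N satisfies g(v(n), v(n+1)) = f(v_∞) for all n ≥ 0, v(0) = u_B, and v(n) → v_∞ as n → ∞. Then G(u_B, v(1)) ≥ F(v_∞). -/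

import Mathlib

/-!
Along a discrete boundary layer the numerical flux is constant, so the scheme leaves the
layer unchanged and the discrete entropy inequality reduces to
`G(v(n+1), v(n+2)) ≤ G(v(n), v(n+1))`. The entropy fluxes `G(v(n), v(n+1))` therefore
decrease, and by continuity and consistency they converge to `G(v_∞, v_∞) = F(v_∞)`;
a decreasing sequence dominates its limit.
-/

open Filter Topology

section EntropyFlux

variable {E : Type*} [AddCommGroup E] [Module ℝ E] {g : E → E → E} {G : E → E → ℝ}
  {U : E → ℝ} {lam : ℝ}

theorem entropyFlux_le_of_flux_eq (hlam : 0 < lam)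
    (hent : ∀ a b c : E, U (b - lam • (g b c - g a b)) - U b + lam * (G b c - G a b) ≤ 0)
    {a b c : E} (hg : g b c = g a b) : G b c ≤ G a b := by
  have h := hent a b c
  rw [hg, sub_self, smul_zero, sub_zero, sub_self, zero_add] at h
  have : G b c - G a b ≤ 0 := nonpos_of_mul_nonpos_right h hlam
  linarith

theorem antitone_entropyFlux_of_flux_const (hlam : 0 < lam)
    (hent : ∀ a b c : E, U (b - lam • (g b c - g a b)) - U b + lam * (G b c - G a b) ≤ 0)
    {v : ℕ → E} {q : E} (hlayer : ∀ n, g (v n) (v (n + 1)) = q) :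
    Antitone fun n => G (v n) (v (n + 1)) :=
  antitone_nat_of_succ_le fun n =>
    entropyFlux_le_of_flux_eq hlam hent ((hlayer (n + 1)).trans (hlayer n).symm)

end EntropyFlux

theorem Filter.Tendsto.apply_consecutive {X Y : Type*} [TopologicalSpace X] [TopologicalSpace Y]
    {G : X → X → Y} (hG : Continuous fun p : X × X => G p.1 p.2) {v : ℕ → X} {x : X}
    (hv : Tendsto v atTop (𝓝 x)) :
    Tendsto (fun n => G (v n) (v (n + 1))) atTop (𝓝 (G x x)) :=
  (hG.tendsto (x, x)).comp (hv.prodMk_nhds (hv.comp (tendsto_add_atTop_nat 1)))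

theorem discrete_layer_subset_entropy_set {N : ℕ}
    (f : EuclideanSpace ℝ (Fin N) → EuclideanSpace ℝ (Fin N))
    (g : EuclideanSpace ℝ (Fin N) → EuclideanSpace ℝ (Fin N) → EuclideanSpace ℝ (Fin N))
    (F : EuclideanSpace ℝ (Fin N) → ℝ)
    (G : EuclideanSpace ℝ (Fin N) → EuclideanSpace ℝ (Fin N) → ℝ)
    (hG : Continuous fun p : EuclideanSpace ℝ (Fin N) × EuclideanSpace ℝ (Fin N) => G p.1 p.2)
    (hGF : ∀ w, G w w = F w)
    (U : EuclideanSpace ℝ (Fin N) → ℝ) (lam : ℝ) (hlam : 0 < lam)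
    (hent : ∀ a b c : EuclideanSpace ℝ (Fin N),
      U (b - lam • (g b c - g a b)) - U b + lam * (G b c - G a b) ≤ 0)
    (uB vinf : EuclideanSpace ℝ (Fin N)) (v : ℕ → EuclideanSpace ℝ (Fin N))
    (hlayer : ∀ n : ℕ, g (v n) (v (n + 1)) = f vinf)
    (hv0 : v 0 = uB)
    (hlim : Tendsto v atTop (nhds vinf)) :
    F vinf ≤ G uB (v 1) := by
  have hanti := antitone_entropyFlux_of_flux_const hlam hent hlayer
  have htend := hlim.apply_consecutive hG
  rw [hGF] at htend
  simpa [hv0] using hanti.le_of_tendsto htend 0
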